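/- For all integers m1 ≥ 2 and m2 ≥ 1, ∫₀^{π/4} sin^{m1}(2x)·cos^{m2}(2x) / sin²(x) dx = ((m1+m2)/(m1−1)) · (1 + S(m1, m2)) · ∫₀^{π/2} sin^{m1}(x)·cos^{m2}(x) dx. -/

import Mathlib

/-!
Since `sin² (2x) / sin² x = 2 (1 + cos 2x)`, the substitution `u = 2x` turns the left side into
`W (m1 - 2) m2 + W (m1 - 2) (m2 + 1)`, where `W a b = ∫₀^{π/2} sin^a x cos^b x dx`.
Integration by parts gives the Wallis recurrence `W a (b + 2) = (b + 1) / (a + b + 2) * W a b`,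
which together with `W a b = W b a` and the values at `b = 0, 1` identifies `W a b` with
`B ((a + 1) / 2, (b + 1) / 2) / 2`. Hence `W m1 m2 = (m1 - 1) / (m1 + m2) * W (m1 - 2) m2` and
`W (m1 - 2) (m2 + 1) = S m1 m2 * W (m1 - 2) m2`.
-/

open Real

/-- For positive integers `m1, m2`, the ratio
`S(m1, m2) = Γ((m2+2)/2)·Γ((m1+m2)/2) / (Γ((m2+1)/2)·Γ((m1+m2+1)/2))`. -/
noncomputable def S (m1 m2 : ℕ) : ℝ :=
  Real.Gamma (((m2 : ℝ) + 2) / 2) * Real.Gamma (((m1 : ℝ) + m2) / 2) /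
    (Real.Gamma (((m2 : ℝ) + 1) / 2) * Real.Gamma (((m1 : ℝ) + m2 + 1) / 2))

open intervalIntegral
open scoped Interval

theorem eq_of_add_two_eq_mul {F H : ℕ → ℝ} (c : ℕ → ℝ) (hF : ∀ n, F (n + 2) = c n * F n)
    (hH : ∀ n, H (n + 2) = c n * H n) (h0 : F 0 = H 0) (h1 : F 1 = H 1) (n : ℕ) :
    F n = H n := by
  induction n using Nat.twoStepInduction with
  | zero => exact h0
  | one => exact h1
  | more n ih _ => rw [hF, hH, ih]

noncomputable def sinCosIntegral (a b : ℕ) : ℝ := ∫ x in (0 : ℝ)..π / 2, sin x ^ a * cos x ^ b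

theorem intervalIntegrable_sin_pow_mul_cos_pow (a b : ℕ) (u v : ℝ) :
    IntervalIntegrable (fun x => sin x ^ a * cos x ^ b) MeasureTheory.volume u v :=
  (by fun_prop : Continuous fun x => sin x ^ a * cos x ^ b).intervalIntegrable u v

theorem sinCosIntegral_comm (a b : ℕ) : sinCosIntegral a b = sinCosIntegral b a := by
  have h := integral_comp_sub_left (fun x => sin x ^ a * cos x ^ b) (π / 2) (a := 0) (b := π / 2)
  simp only [sin_pi_div_two_sub, cos_pi_div_two_sub, sub_zero, sub_self] at h
  rw [sinCosIntegral, sinCosIntegral, ← h]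
  simp only [mul_comm]

theorem sinCosIntegral_zero_zero : sinCosIntegral 0 0 = π / 2 := by
  simp [sinCosIntegral]

theorem sinCosIntegral_one_right (a : ℕ) : sinCosIntegral a 1 = 1 / (a + 1) := by
  have hderiv (x : ℝ) : HasDerivAt (fun x => sin x ^ (a + 1) / (a + 1)) (sin x ^ a * cos x) x := by
    refine (((hasDerivAt_sin x).fun_pow (a + 1)).div_const ((a : ℝ) + 1)).congr_deriv ?_
    push_cast
    field_simp
  simp only [sinCosIntegral, pow_one]
  rw [integral_eq_sub_of_hasDerivAt (fun x _ => hderiv x)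
    ((by fun_prop : Continuous fun x => sin x ^ a * cos x).intervalIntegrable _ _)]
  simp

theorem sinCosIntegral_add_two_left_add_add_two_right (a b : ℕ) :
    sinCosIntegral (a + 2) b + sinCosIntegral a (b + 2) = sinCosIntegral a b := by
  rw [sinCosIntegral, sinCosIntegral, sinCosIntegral, ← integral_add
    (intervalIntegrable_sin_pow_mul_cos_pow _ _ _ _) (intervalIntegrable_sin_pow_mul_cos_pow _ _ _ _)]
  refine integral_congr fun x _ => ?_
  linear_combination (sin x ^ a * cos x ^ b) * sin_sq_add_cos_sq x

theorem mul_sinCosIntegral_add_two_right (a b : ℕ) :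
    (a + 1) * sinCosIntegral a (b + 2) = (b + 1) * sinCosIntegral (a + 2) b := by
  have hderiv (x : ℝ) : HasDerivAt (fun x => sin x ^ (a + 1) * cos x ^ (b + 1))
      ((a + 1) * (sin x ^ a * cos x ^ (b + 2)) - (b + 1) * (sin x ^ (a + 2) * cos x ^ b)) x := by
    refine (((hasDerivAt_sin x).fun_pow (a + 1)).fun_mul
      ((hasDerivAt_cos x).fun_pow (b + 1))).congr_deriv ?_
    push_cast
    ring
  have hint := (intervalIntegrable_sin_pow_mul_cos_pow a (b + 2) 0 (π / 2)).const_mul ((a : ℝ) + 1)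
    |>.sub ((intervalIntegrable_sin_pow_mul_cos_pow (a + 2) b 0 (π / 2)).const_mul ((b : ℝ) + 1))
  have h := integral_eq_sub_of_hasDerivAt (fun x _ => hderiv x) hint
  rw [integral_sub (intervalIntegrable_sin_pow_mul_cos_pow _ _ _ _ |>.const_mul _)
    (intervalIntegrable_sin_pow_mul_cos_pow _ _ _ _ |>.const_mul _), integral_const_mul,
    integral_const_mul] at h
  simpa [sinCosIntegral, sub_eq_zero] using h

theorem sinCosIntegral_add_two_right (a b : ℕ) :
    sinCosIntegral a (b + 2) = (b + 1) / (a + b + 2) * sinCosIntegral a b := by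
  have h := mul_sinCosIntegral_add_two_right a b
  rw [← sinCosIntegral_add_two_left_add_add_two_right a b]
  field_simp
  linarith

theorem sinCosIntegral_add_two_left (a b : ℕ) :
    sinCosIntegral (a + 2) b = (a + 1) / (a + b + 2) * sinCosIntegral a b := by
  rw [sinCosIntegral_comm, sinCosIntegral_add_two_right, sinCosIntegral_comm, add_comm (b : ℝ)]

noncomputable def sinCosGamma (x y : ℝ) : ℝ :=
  Gamma ((x + 1) / 2) * Gamma ((y + 1) / 2) / (2 * Gamma ((x + y) / 2 + 1))

theorem sinCosGamma_comm (x y : ℝ) : sinCosGamma x y = sinCosGamma y x := by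
  rw [sinCosGamma, sinCosGamma, mul_comm, add_comm x y]

theorem sinCosGamma_zero_zero : sinCosGamma 0 0 = π / 2 := by
  have h := Gamma_one_half_eq
  rw [sinCosGamma]
  norm_num at h ⊢
  rw [h, mul_self_sqrt pi_pos.le]

theorem sinCosGamma_one_right {x : ℝ} (hx : -1 < x) : sinCosGamma x 1 = 1 / (x + 1) := by
  have hpos : 0 < Gamma ((x + 1) / 2) := Gamma_pos_of_pos (by linarith)
  rw [sinCosGamma, Gamma_add_one (s := (x + 1) / 2) (by linarith)]
  field_simp
  norm_num

theorem sinCosGamma_add_two_right {x y : ℝ} (hx : 0 ≤ x) (hy : 0 ≤ y) :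
    sinCosGamma x (y + 2) = (y + 1) / (x + y + 2) * sinCosGamma x y := by
  have hy' : Gamma ((y + 2 + 1) / 2) = (y + 1) / 2 * Gamma ((y + 1) / 2) := by
    rw [← Gamma_add_one (by positivity)]
    ring_nf
  have hxy : Gamma ((x + (y + 2)) / 2 + 1) = ((x + y) / 2 + 1) * Gamma ((x + y) / 2 + 1) := by
    rw [← Gamma_add_one (by positivity)]
    ring_nf
  have hpos : 0 < Gamma ((x + y) / 2 + 1) := Gamma_pos_of_pos (by positivity)
  rw [sinCosGamma, sinCosGamma, hy', hxy]
  field_simp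

theorem sinCosIntegral_eq_sinCosGamma (a b : ℕ) : sinCosIntegral a b = sinCosGamma a b := by
  have hrec (a : ℕ) := eq_of_add_two_eq_mul (F := sinCosIntegral a) (H := fun b => sinCosGamma a b)
    (fun b => ((b : ℝ) + 1) / (a + b + 2))
    (sinCosIntegral_add_two_right a) (fun b => by
      exact_mod_cast sinCosGamma_add_two_right (Nat.cast_nonneg a) (Nat.cast_nonneg b))
  have hone (a : ℕ) : sinCosIntegral a 1 = sinCosGamma a (1 : ℕ) := by
    rw [Nat.cast_one, sinCosIntegral_one_right,
      sinCosGamma_one_right (neg_one_lt_zero.trans_le a.cast_nonneg)]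
  have hzero : ∀ b : ℕ, sinCosIntegral 0 b = sinCosGamma (0 : ℕ) b :=
    hrec 0 (by simpa using sinCosIntegral_zero_zero.trans sinCosGamma_zero_zero.symm) (hone 0)
  refine hrec a ?_ (hone a) b
  rw [sinCosIntegral_comm, hzero, sinCosGamma_comm, Nat.cast_zero]

theorem sinCosIntegral_succ_right (a b : ℕ) :
    sinCosIntegral a (b + 1) = S (a + 2) b * sinCosIntegral a b := by
  have hpos : ∀ {s : ℝ}, 0 < s → Gamma s ≠ 0 := fun hs => (Gamma_pos_of_pos hs).ne'
  rw [sinCosIntegral_eq_sinCosGamma, sinCosIntegral_eq_sinCosGamma, sinCosGamma, sinCosGamma, S]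
  push_cast
  rw [show ((a : ℝ) + 2 + b) / 2 = (a + b) / 2 + 1 by ring,
    show ((a : ℝ) + 2 + b + 1) / 2 = (a + (b + 1)) / 2 + 1 by ring,
    show ((b : ℝ) + 2) / 2 = (b + 1 + 1) / 2 by ring]
  field_simp [hpos (s := (a + 1) / 2) (by positivity), hpos (s := (b + 1) / 2) (by positivity),
    hpos (s := (a + b) / 2 + 1) (by positivity), hpos (s := (a + (b + 1)) / 2 + 1) (by positivity)]

theorem integral_sin_two_mul_pow_mul_cos_two_mul_pow_div_sin_sq (a b : ℕ) :
    ∫ x in (0 : ℝ)..π / 4, sin (2 * x) ^ (a + 2) * cos (2 * x) ^ b / sin x ^ 2 =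
      sinCosIntegral a b + sinCosIntegral a (b + 1) := by
  set f : ℝ → ℝ := fun u => sin u ^ a * cos u ^ b + sin u ^ a * cos u ^ (b + 1)
  have hintegrand : ∀ᵐ x, x ∈ Ι 0 (π / 4) →
      sin (2 * x) ^ (a + 2) * cos (2 * x) ^ b / sin x ^ 2 = 2 * f (2 * x) := by
    refine Filter.Eventually.of_forall fun x hx => ?_
    rw [Set.uIoc_of_le (by positivity)] at hx
    have hsin : sin x ≠ 0 := (sin_pos_of_pos_of_lt_pi hx.1 (by linarith [pi_pos, hx.2])).ne'
    simp only [f, sin_two_mul, cos_two_mul]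
    field_simp
    ring
  rw [integral_congr_ae hintegrand, integral_const_mul, mul_integral_comp_mul_left, mul_zero,
    show 2 * (π / 4) = π / 2 by ring, integral_add (intervalIntegrable_sin_pow_mul_cos_pow _ _ _ _)
    (intervalIntegrable_sin_pow_mul_cos_pow _ _ _ _), sinCosIntegral, sinCosIntegral]

theorem integral_K1_eq_S_mul_G_general (m1 m2 : ℕ) (hm1 : 2 ≤ m1) :
    ∫ x in (0 : ℝ)..(Real.pi / 4),
        Real.sin (2 * x) ^ m1 * Real.cos (2 * x) ^ m2 / Real.sin x ^ 2 =
      (((m1 : ℝ) + m2) / ((m1 : ℝ) - 1)) * (1 + S m1 m2) *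
        ∫ x in (0 : ℝ)..(Real.pi / 2), Real.sin x ^ m1 * Real.cos x ^ m2 := by
  obtain ⟨a, rfl⟩ := Nat.exists_eq_add_of_le' hm1
  rw [integral_sin_two_mul_pow_mul_cos_two_mul_pow_div_sin_sq, ← sinCosIntegral,
    sinCosIntegral_add_two_left, sinCosIntegral_succ_right]
  have ha : ((a + 2 : ℕ) : ℝ) - 1 = a + 1 := by push_cast; ring
  rw [ha]
  push_cast
  field_simp
  ring

/-- for all integers `m1 ≥ 2`, `m2 ≥ 1`,
`∫₀^{π/4} sin^{m1}(2x)·cos^{m2}(2x)/sin²x dx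
  = ((m1+m2)/(m1−1))·(1 + S(m1, m2))·∫₀^{π/2} sin^{m1}x·cos^{m2}x dx`. -/
theorem integral_K1_eq_S_mul_G (m1 m2 : ℕ) (hm1 : 2 ≤ m1) (hm2 : 1 ≤ m2) :
    ∫ x in (0 : ℝ)..(Real.pi / 4),
        Real.sin (2 * x) ^ m1 * Real.cos (2 * x) ^ m2 / Real.sin x ^ 2 =
      (((m1 : ℝ) + m2) / ((m1 : ℝ) - 1)) * (1 + S m1 m2) *
        ∫ x in (0 : ℝ)..(Real.pi / 2), Real.sin x ^ m1 * Real.cos x ^ m2 :=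
  integral_K1_eq_S_mul_G_general m1 m2 hm1
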